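/- For every j with 3 ≤ j ≤ n, the order of the product f^B_{j−2} f^B_{j−1} of consecutive burnt pancake generators in the hyperoctahedral group B_n is 2j. -/

import Mathlib

/-! On the first `j` positions `g = f^B_{j-2} f^B_{j-1}` shifts each entry one place down,
keeping its sign, and sends position `0` to position `j - 1` with the sign flipped; all
other positions are fixed. So `g` is a "signed `j`-cycle": `g ^ j` negates the first `j`
entries, whence `g ^ (2 j) = 1`, while the orbit of `(j - 1, +)` shows that no smaller
positive power is trivial. -/

/-- The burnt pancake generator `f^B_m` of the hyperoctahedral group `B_n` of signed
permutations, modeled as a permutation of `Fin n × Bool` (a `0`-indexed position together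
with a sign, `false` meaning positive): it reverses and negates the first `m+1` entries,
sending `(a, s)` to `(m - a, !s)` whenever `a ≤ m` (and `m < n`), and fixing all other
points.  (In `1`-indexed terms, `f^B_m a = -(m + 2 - a)` for `1 ≤ a ≤ m + 1` and
`f^B_m a = a` for `m + 1 < a ≤ n`; for `m = 0` it is the sign change of the first entry.) -/
def bpancake (n m : ℕ) : Equiv.Perm (Fin n × Bool) :=
  Function.Involutive.toPerm
    (fun x => if h : (x.1 : ℕ) ≤ m ∧ m < n then
        (⟨m - (x.1 : ℕ), Nat.lt_of_le_of_lt (Nat.sub_le m x.1) h.2⟩, !x.2) else x)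
    (by
      intro x
      dsimp only
      by_cases h : (x.1 : ℕ) ≤ m ∧ m < n
      · rw [dif_pos h, dif_pos ⟨Nat.sub_le m (x.1 : ℕ), h.2⟩]
        exact Prod.ext (Fin.ext (Nat.sub_sub_self h.1)) (Bool.not_not x.2)
      · rw [dif_neg h, dif_neg h])

lemma bpancake_apply_of_le {n m : ℕ} (a : Fin n) (s : Bool) (ham : (a : ℕ) ≤ m) (hmn : m < n) :
    bpancake n m (a, s) = (⟨m - a, by omega⟩, !s) :=
  dif_pos ⟨ham, hmn⟩

lemma bpancake_apply_of_lt {n m : ℕ} (a : Fin n) (s : Bool) (hma : m < (a : ℕ)) :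
    bpancake n m (a, s) = (a, s) :=
  dif_neg (by simp only; omega)

def bpancakeConsec (n j : ℕ) : Equiv.Perm (Fin n × Bool) :=
  bpancake n (j - 2) * bpancake n (j - 1)

section bpancakeConsec

variable {n j : ℕ}

lemma bpancakeConsec_apply_zero (hj : 2 ≤ j) (hjn : j ≤ n) (s : Bool) :
    bpancakeConsec n j (⟨0, by omega⟩, s) = (⟨j - 1, by omega⟩, !s) := by
  rw [bpancakeConsec, Equiv.Perm.mul_apply, bpancake_apply_of_le _ s (Nat.zero_le _) (by omega),
    bpancake_apply_of_lt _ _ (by simp only; omega)]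
  rfl

lemma bpancakeConsec_apply_of_pos (hjn : j ≤ n) (a : Fin n) (s : Bool) (ha : 0 < (a : ℕ))
    (haj : (a : ℕ) < j) : bpancakeConsec n j (a, s) = (⟨a - 1, by omega⟩, s) := by
  rw [bpancakeConsec, Equiv.Perm.mul_apply, bpancake_apply_of_le _ s (by omega) (by omega),
    bpancake_apply_of_le _ _ (by simp only; omega) (by omega), Bool.not_not]
  congr 2
  simp only
  omega

lemma bpancakeConsec_apply_of_le (hj : 0 < j) (a : Fin n) (s : Bool) (hja : j ≤ (a : ℕ)) :
    bpancakeConsec n j (a, s) = (a, s) := by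
  rw [bpancakeConsec, Equiv.Perm.mul_apply, bpancake_apply_of_lt _ s (by omega),
    bpancake_apply_of_lt _ s (by omega)]

lemma bpancakeConsec_pow_apply_of_le (hjn : j ≤ n) (a : Fin n) (s : Bool) (haj : (a : ℕ) < j) :
    ∀ k ≤ (a : ℕ), (bpancakeConsec n j ^ k) (a, s) = (⟨a - k, by omega⟩, s)
  | 0, _ => rfl
  | k + 1, hk => by
    rw [pow_succ', Equiv.Perm.mul_apply, bpancakeConsec_pow_apply_of_le hjn a s haj k (by omega),
      bpancakeConsec_apply_of_pos hjn _ s (by simp only; omega) (by simp only; omega)]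
    congr 2

lemma bpancakeConsec_pow_self_apply (hj : 2 ≤ j) (hjn : j ≤ n) (a : Fin n) (s : Bool) :
    (bpancakeConsec n j ^ j) (a, s) = (a, if (a : ℕ) < j then !s else s) := by
  split_ifs with haj
  · -- `a` steps down to `0`, jumps to `j - 1` with its sign flipped, then steps down to `a`.
    have hsplit : bpancakeConsec n j ^ j =
        bpancakeConsec n j ^ (j - 1 - a) * bpancakeConsec n j * bpancakeConsec n j ^ (a : ℕ) := by
      rw [← pow_succ, ← pow_add]
      congr 1
      omega
    rw [hsplit, Equiv.Perm.mul_apply, Equiv.Perm.mul_apply,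
      bpancakeConsec_pow_apply_of_le hjn a s haj a le_rfl]
    simp only [Nat.sub_self]
    rw [bpancakeConsec_apply_zero hj hjn, bpancakeConsec_pow_apply_of_le hjn _ _ (by simp only; omega)
      _ (by simp only; omega)]
    congr 2
    simp only
    omega
  · exact Equiv.Perm.pow_apply_eq_self_of_apply_eq_self
      (bpancakeConsec_apply_of_le (by omega) a s (by omega)) j

lemma bpancakeConsec_pow_two_mul_self (hj : 2 ≤ j) (hjn : j ≤ n) :
    bpancakeConsec n j ^ (2 * j) = 1 := by
  ext ⟨a, s⟩ : 1
  rw [mul_comm, pow_mul, sq, Equiv.Perm.mul_apply, bpancakeConsec_pow_self_apply hj hjn,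
    bpancakeConsec_pow_self_apply hj hjn]
  split_ifs <;> simp

end bpancakeConsec

/-- For every `j` with `3 ≤ j ≤ n`, the order of the product `f^B_{j-2} f^B_{j-1}` of
consecutive burnt pancake generators in the hyperoctahedral group `B_n` is `2j`. -/
theorem order_bpancake_mul_consecutive (n j : ℕ) (hj3 : 3 ≤ j) (hjn : j ≤ n) :
    orderOf (bpancake n (j - 2) * bpancake n (j - 1)) = 2 * j := by
  have hj : 2 ≤ j := by omega
  let top : Fin n := ⟨j - 1, by omega⟩
  have htop : (top : ℕ) = j - 1 := rfl
  refine (orderOf_eq_iff (by omega)).2 ⟨bpancakeConsec_pow_two_mul_self hj hjn, fun m hm hm0 h1 => ?_⟩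
  have hfix : (bpancakeConsec n j ^ m) (top, false) = (top, false) := by
    rw [bpancakeConsec, h1, Equiv.Perm.one_apply]
  obtain hmj | hjm := Nat.lt_or_ge m j
  · rw [bpancakeConsec_pow_apply_of_le hjn top false (by omega) m (by omega)] at hfix
    have := congrArg (fun x => (x.1 : ℕ)) hfix
    simp only at this
    omega
  · rw [← Nat.sub_add_cancel hjm, pow_add, Equiv.Perm.mul_apply,
      bpancakeConsec_pow_self_apply hj hjn, if_pos (by omega),
      bpancakeConsec_pow_apply_of_le hjn top _ (by omega) _ (by omega)] at hfix
    exact Bool.noConfusion (congrArg Prod.snd hfix)
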